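/- Let λ ∈ ℝ with λ ≠ 0 and let v₀,…,v₈ be the D2Q9 velocities. Let M₁ be the 9×9 matrix whose rows are the polynomials 1, X, Y, X²+Y², X²−Y², XY, X(X²+Y²), Y(X²+Y²), (X²+Y²)² evaluated at the vⱼ, and let M₂ be the 9×9 matrix whose rows are the polynomials 1, X, Y, X²+Y², X²−Y², XY, XY², YX², X²Y² evaluated at the vⱼ. Let D = diag(0, 0, 0, s₃, s₄, s₅, s₆, s₇, s₈) with s₃ = s₈. Then for every g ∈ ℝ⁹ with Σⱼ g_j = 0 and Σⱼ vⱼ g_j = 0, one has M₁⁻¹ D M₁ g = M₂⁻¹ D M₂ g. In particular, the relaxation phases of the d'Humičres scheme (relative velocity ũ = 0) based on the usual D2Q9 moments and on the cascaded-scheme moments are equivalent. -/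

import Mathlib

/-!
Every D2Q9 velocity component `x` lies in `{0, λ, −λ}`, so `x³ = λ²x`. Hence the cascaded
moments are a fixed lower-triangular recombination of the usual ones, `M₂ = A M₁`, and
`M₂⁻¹ D M₂ = M₁⁻¹ (A⁻¹ D A) M₁`. The matrix `A` only adds multiples of the momentum to the
third-order moments and mixes the energy `X² + Y²` into the fourth-order moment. On a moment
vector with zero momentum the first correction vanishes, and the second commutes with `D`
because the energy and the fourth-order moment relax at the same rate `s₃ = s₈`; so
`A⁻¹ D A` acts there as `D`.
-/

/-- x-components of the D2Q9 velocities. -/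
def vx (lam : ℝ) : Fin 9 → ℝ := ![0, lam, 0, -lam, 0, lam, -lam, -lam, lam]

/-- y-components of the D2Q9 velocities. -/
def vy (lam : ℝ) : Fin 9 → ℝ := ![0, 0, lam, 0, -lam, lam, lam, -lam, -lam]

/-- The usual D2Q9 moment polynomials `1, X, Y, X²+Y², X²−Y², XY, X(X²+Y²),
Y(X²+Y²), (X²+Y²)²` evaluated at `(x, y)`. -/
def P1 (x y : ℝ) : Fin 9 → ℝ :=
  ![1, x, y, x ^ 2 + y ^ 2, x ^ 2 - y ^ 2, x * y,
    x * (x ^ 2 + y ^ 2), y * (x ^ 2 + y ^ 2), (x ^ 2 + y ^ 2) ^ 2]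

/-- The cascaded-scheme moment polynomials `1, X, Y, X²+Y², X²−Y², XY, XY²,
YX², X²Y²` evaluated at `(x, y)`. -/
def P2 (x y : ℝ) : Fin 9 → ℝ :=
  ![1, x, y, x ^ 2 + y ^ 2, x ^ 2 - y ^ 2, x * y,
    x * y ^ 2, y * x ^ 2, x ^ 2 * y ^ 2]

/-- Moment matrix of the usual D2Q9 moments (ũ = 0). -/
def M1 (lam : ℝ) : Matrix (Fin 9) (Fin 9) ℝ :=
  fun k j => P1 (vx lam j) (vy lam j) k

/-- Moment matrix of the cascaded-scheme moments (ũ = 0). -/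
def M2 (lam : ℝ) : Matrix (Fin 9) (Fin 9) ℝ :=
  fun k j => P2 (vx lam j) (vy lam j) k

open Matrix

lemma vx_pow_three (lam : ℝ) (j : Fin 9) : vx lam j ^ 3 = lam ^ 2 * vx lam j := by
  fin_cases j <;> simp [vx] <;> ring

lemma vy_pow_three (lam : ℝ) (j : Fin 9) : vy lam j ^ 3 = lam ^ 2 * vy lam j := by
  fin_cases j <;> simp [vy] <;> ring

/-- `M2 = momentChange * M1`, because on the lattice `X³ = λ²X` and `Y³ = λ²Y`, whence
`XY² = X(X²+Y²) − λ²X`, `YX² = Y(X²+Y²) − λ²Y` and `X²Y² = ((X²+Y²)² − λ²(X²+Y²))/2`. -/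
noncomputable def momentChange (lam : ℝ) : Matrix (Fin 9) (Fin 9) ℝ :=
  !![1, 0, 0, 0, 0, 0, 0, 0, 0;
     0, 1, 0, 0, 0, 0, 0, 0, 0;
     0, 0, 1, 0, 0, 0, 0, 0, 0;
     0, 0, 0, 1, 0, 0, 0, 0, 0;
     0, 0, 0, 0, 1, 0, 0, 0, 0;
     0, 0, 0, 0, 0, 1, 0, 0, 0;
     0, -lam ^ 2, 0, 0, 0, 0, 1, 0, 0;
     0, 0, -lam ^ 2, 0, 0, 0, 0, 1, 0;
     0, 0, 0, -lam ^ 2 / 2, 0, 0, 0, 0, 1 / 2]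

noncomputable def momentChangeInv (lam : ℝ) : Matrix (Fin 9) (Fin 9) ℝ :=
  !![1, 0, 0, 0, 0, 0, 0, 0, 0;
     0, 1, 0, 0, 0, 0, 0, 0, 0;
     0, 0, 1, 0, 0, 0, 0, 0, 0;
     0, 0, 0, 1, 0, 0, 0, 0, 0;
     0, 0, 0, 0, 1, 0, 0, 0, 0;
     0, 0, 0, 0, 0, 1, 0, 0, 0;
     0, lam ^ 2, 0, 0, 0, 0, 1, 0, 0;
     0, 0, lam ^ 2, 0, 0, 0, 0, 1, 0;
     0, 0, 0, lam ^ 2, 0, 0, 0, 0, 2]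

lemma M2_eq_momentChange_mul_M1 (lam : ℝ) : M2 lam = momentChange lam * M1 lam := by
  ext k j
  have hx := vx_pow_three lam j
  have hy := vy_pow_three lam j
  fin_cases k <;> simp [M1, M2, P1, P2, momentChange, mul_apply, Fin.sum_univ_succ]
  · linear_combination -hx
  · linear_combination -hy
  · linear_combination -(vx lam j * hx + vy lam j * hy) / 2

lemma inv_momentChange (lam : ℝ) : (momentChange lam)⁻¹ = momentChangeInv lam := by
  refine inv_eq_left_inv ?_
  ext i j
  fin_cases i <;> fin_cases j <;>
    norm_num [momentChange, momentChangeInv, mul_apply, Fin.sum_univ_succ, one_apply]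
  ring

lemma momentChangeInv_mulVec_diagonal_mulVec_momentChange {lam : ℝ} {s : Fin 9 → ℝ}
    (hs38 : s 3 = s 8) {m : Fin 9 → ℝ} (hm1 : m 1 = 0) (hm2 : m 2 = 0) :
    momentChangeInv lam *ᵥ (diagonal s *ᵥ (momentChange lam *ᵥ m)) = diagonal s *ᵥ m := by
  ext i
  fin_cases i <;>
    simp [momentChange, momentChangeInv, mulVec, dotProduct, Fin.sum_univ_succ, hm1, hm2, hs38]
  ring

theorem stmt_10_general (lam : ℝ)
    (s : Fin 9 → ℝ)
    (hs38 : s 3 = s 8)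
    (g : Fin 9 → ℝ)
    (hgx : ∑ j, vx lam j * g j = 0) (hgy : ∑ j, vy lam j * g j = 0) :
    ((M1 lam)⁻¹ * Matrix.diagonal s * M1 lam).mulVec g
      = ((M2 lam)⁻¹ * Matrix.diagonal s * M2 lam).mulVec g := by
  have hm1 : (M1 lam *ᵥ g) 1 = 0 := hgx
  have hm2 : (M1 lam *ᵥ g) 2 = 0 := hgy
  rw [M2_eq_momentChange_mul_M1, Matrix.mul_inv_rev, inv_momentChange]
  simp only [Matrix.mul_assoc, ← mulVec_mulVec]
  rw [momentChangeInv_mulVec_diagonal_mulVec_momentChange hs38 hm1 hm2]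

/-- For the d'Humières scheme (ũ = 0), the relaxation operators based on the
usual D2Q9 moments and on the cascaded-scheme moments agree on every vector
with zero density and momentum, provided `s 3 = s 8`. -/
theorem stmt_10 (lam : ℝ) (hlam : lam ≠ 0)
    (s : Fin 9 → ℝ) (hs0 : s 0 = 0) (hs1 : s 1 = 0) (hs2 : s 2 = 0)
    (hs38 : s 3 = s 8)
    (g : Fin 9 → ℝ) (hg : ∑ j, g j = 0)
    (hgx : ∑ j, vx lam j * g j = 0) (hgy : ∑ j, vy lam j * g j = 0) :
    ((M1 lam)⁻¹ * Matrix.diagonal s * M1 lam).mulVec g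
      = ((M2 lam)⁻¹ * Matrix.diagonal s * M2 lam).mulVec g :=
  stmt_10_general lam s hs38 g hgx hgy
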